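/- Let A : X ⇒ X and B : X ⇒ X be maximally monotone operators that are both 3* monotone. Then ran T_{(A,B)} ≃ (dom A − ran B) ∩ (ran A + dom B), i.e. the range of the Douglas–Rachford operator is nearly equal to this intersection of Minkowski difference and sum. -/

import Mathlib

open Set Pointwise

/-- Domain of a set-valued operator. -/
def svDom {X : Type*} (A : X → Set X) : Set X := {x | (A x).Nonempty}

/-- Range of a set-valued operator. -/
def svRan {X : Type*} (A : X → Set X) : Set X := ⋃ x, A x

/-- Monotonicity of a set-valued operator. -/
def IsMonotoneOp {X : Type*} [NormedAddCommGroup X] [InnerProductSpace ℝ X]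
    (A : X → Set X) : Prop :=
  ∀ ⦃x u y v : X⦄, u ∈ A x → v ∈ A y → 0 ≤ (inner ℝ (x - y) (u - v) : ℝ)

/-- Maximal monotonicity of a set-valued operator. -/
def IsMaxMonotoneOp {X : Type*} [NormedAddCommGroup X] [InnerProductSpace ℝ X]
    (A : X → Set X) : Prop :=
  IsMonotoneOp A ∧
    ∀ x u : X, (∀ y v : X, v ∈ A y → 0 ≤ (inner ℝ (x - y) (u - v) : ℝ)) → u ∈ A x

/-- `A` is 3* monotone (rectangular): for every `x ∈ dom A` and `v ∈ ran A`, the set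
`{⟪x - z, v - w⟫ : (z,w) ∈ gra A}` is bounded below. -/
def Is3StarMonotoneOp {X : Type*} [NormedAddCommGroup X] [InnerProductSpace ℝ X]
    (A : X → Set X) : Prop :=
  ∀ x ∈ svDom A, ∀ v ∈ svRan A,
    BddBelow {r : ℝ | ∃ z w : X, w ∈ A z ∧ r = (inner ℝ (x - z) (v - w) : ℝ)}

/-- Two sets are nearly equal if they have the same closure and the same relative
(intrinsic) interior. -/
def NearEq {X : Type*} [NormedAddCommGroup X] [NormedSpace ℝ X] (C D : Set X) : Prop :=
  closure C = closure D ∧ intrinsicInterior ℝ C = intrinsicInterior ℝ D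

/-- `J` is the resolvent of `A`: the single-valued, everywhere-defined map with
`x - J x ∈ A (J x)` for all `x`. -/
def IsResolventOf {X : Type*} [NormedAddCommGroup X] (J : X → X) (A : X → Set X) : Prop :=
  ∀ x : X, x - J x ∈ A (J x)

/-- The Douglas–Rachford operator `T = Id - J_A + J_B ∘ (2 J_A - Id)` built from
the resolvents `J_A` and `J_B`. -/
noncomputable def drT {X : Type*} [NormedAddCommGroup X] [NormedSpace ℝ X]
    (JA JB : X → X) : X → X :=
  fun x => x - JA x + JB ((2 : ℝ) • JA x - x)

/-!
`T = T_{(A,B)}` is firmly nonexpansive, so `T = J_C` for the monotone operator `C` with graph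
`{(T t, t - T t)}`. Call `x` gap bounded if `⟪x - z, c⟫ ≤ α + β ‖z‖` on `gra C`; gap bounded
points are limits of values `T t` with `x - T t = λ (t - T t)`, `λ → 0`. Points of `ran T`, hence
of `E = conv (ran T)`, are gap bounded. At `x ∈ ri E` the bounds at nearby points of `aff E` keep
the component of `t - T t` along the direction of `aff E` bounded, and a limit point `w` of it
satisfies `T (x + w) = x`; so `ri E ⊆ ran T`. Points of `D = (dom A - ran B) ∩ (ran A + dom B)`
are gap bounded by 3* monotonicity of `A` and `B`, so `ran T ⊆ D ⊆ cl (ran T)`. Both `ran T` and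
`D` thus lie between `ri E` and `cl E`, and for convex `E` every such set `M` has `ri M = ri E`.
-/

open Filter Topology AffineMap
open scoped RealInnerProductSpace

section IntrinsicInterior

variable {X : Type*} [NormedAddCommGroup X] [NormedSpace ℝ X] {s : Set X} {x : X}

theorem exists_forall_dist_lt_mem_intrinsicInterior (hx : x ∈ intrinsicInterior ℝ s) :
    ∃ ε > 0, ∀ y ∈ affineSpan ℝ s, dist y x < ε → y ∈ intrinsicInterior ℝ s := by
  obtain ⟨x, hx, rfl⟩ := hx
  obtain ⟨ε, hε, hball⟩ := Metric.isOpen_iff.1 isOpen_interior x hx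
  exact ⟨ε, hε, fun y hy hyx => ⟨⟨y, hy⟩, hball hyx, rfl⟩⟩

theorem mem_intrinsicInterior_iff_dist :
    x ∈ intrinsicInterior ℝ s ↔
      x ∈ affineSpan ℝ s ∧ ∃ ε > 0, ∀ y ∈ affineSpan ℝ s, dist y x < ε → y ∈ s := by
  refine ⟨fun hx => ⟨subset_affineSpan ℝ s (intrinsicInterior_subset hx), ?_⟩, ?_⟩
  · obtain ⟨ε, hε, hball⟩ := exists_forall_dist_lt_mem_intrinsicInterior hx
    exact ⟨ε, hε, fun y hy hyx => intrinsicInterior_subset (hball y hy hyx)⟩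
  · rintro ⟨hx, ε, hε, hball⟩
    exact ⟨⟨x, hx⟩, mem_interior_iff_mem_nhds.2
      (Metric.mem_nhds_iff.2 ⟨ε, hε, fun y hy => hball y y.2 hy⟩), rfl⟩

variable [FiniteDimensional ℝ X]

theorem closure_subset_affineSpan (s : Set X) : closure s ⊆ affineSpan ℝ s :=
  closure_minimal (subset_affineSpan ℝ s) (affineSpan ℝ s).closed_of_finiteDimensional

theorem Convex.lineMap_mem_intrinsicInterior {E : Set X} (hE : Convex ℝ E) {x₀ x₁ : X}
    (hx₀ : x₀ ∈ intrinsicInterior ℝ E) (hx₁ : x₁ ∈ closure E) {t : ℝ} (ht₀ : 0 < t)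
    (ht₁ : t ≤ 1) : lineMap x₁ x₀ t ∈ intrinsicInterior ℝ E := by
  obtain ⟨hx₀a, ε, hε, hball⟩ := mem_intrinsicInterior_iff_dist.1 hx₀
  obtain ⟨x₂, hx₂, hx₁₂⟩ := Metric.mem_closure_iff.1 hx₁ (t * ε / 2) (by positivity)
  have hx₁a := closure_subset_affineSpan E hx₁
  have hx₂a := subset_affineSpan ℝ E hx₂
  refine mem_intrinsicInterior_iff_dist.2
    ⟨AffineMap.lineMap_mem t hx₁a hx₀a, t * ε / 2, by positivity, fun z hza hzw => ?_⟩
  -- `z` is the point at parameter `t` on the segment from `x₂` to `y`, where `y` is near `x₀`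
  set y := lineMap x₂ z t⁻¹
  have hty : t • (y - x₀) = (z - lineMap x₁ x₀ t) + (1 - t) • (x₁ - x₂) := by
    simp only [y, lineMap_apply_module]
    match_scalars <;> field_simp <;> ring
  have hyx₀ : dist y x₀ < ε := by
    rw [dist_eq_norm, ← mul_lt_mul_iff_right₀ ht₀, ← Real.norm_of_nonneg ht₀.le, ← norm_smul,
      hty]
    calc ‖(z - lineMap x₁ x₀ t) + (1 - t) • (x₁ - x₂)‖
        ≤ ‖z - lineMap x₁ x₀ t‖ + ‖(1 - t) • (x₁ - x₂)‖ := norm_add_le _ _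
      _ ≤ ‖z - lineMap x₁ x₀ t‖ + ‖x₁ - x₂‖ := by
          rw [norm_smul, Real.norm_of_nonneg (by linarith)]
          gcongr
          exact mul_le_of_le_one_left (norm_nonneg _) (by linarith)
      _ < t * ε / 2 + t * ε / 2 := by
          rw [← dist_eq_norm, ← dist_eq_norm]; gcongr
      _ = ‖t‖ * ε := by rw [Real.norm_of_nonneg ht₀.le]; ring
  have hz : z = lineMap x₂ y t := by
    simp only [y, lineMap_apply_module]
    match_scalars <;> field_simp
    ring
  rw [hz]
  exact hE.lineMap_mem hx₂ (hball y (AffineMap.lineMap_mem _ hx₂a hza) hyx₀) ⟨ht₀.le, ht₁⟩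

theorem Convex.intrinsicInterior_eq_of_subset_of_subset_closure {E M : Set X}
    (hE : Convex ℝ E) (hEM : intrinsicInterior ℝ E ⊆ M) (hME : M ⊆ closure E) :
    intrinsicInterior ℝ M = intrinsicInterior ℝ E := by
  obtain rfl | hne := E.eq_empty_or_nonempty
  · rw [closure_empty, subset_empty_iff] at hME
    rw [hME]
  obtain ⟨x₀, hx₀⟩ := hne.intrinsicInterior hE
  have hx₀M : x₀ ∈ affineSpan ℝ M := mem_affineSpan ℝ (hEM hx₀)
  have hspan : affineSpan ℝ M = affineSpan ℝ E := by
    refine le_antisymm (affineSpan_le.2 (hME.trans (closure_subset_affineSpan E)))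
      (affineSpan_le.2 fun p hp => ?_)
    have hm := hE.lineMap_mem_intrinsicInterior hx₀ (subset_closure hp) one_half_pos
      one_half_lt_one.le
    have hp : p = lineMap x₀ (lineMap p x₀ (1 / 2 : ℝ)) (2 : ℝ) := by
      simp only [lineMap_apply_module]; module
    rw [hp]
    exact AffineMap.lineMap_mem _ hx₀M (mem_affineSpan ℝ (hEM hm))
  ext x
  constructor
  · intro hx
    obtain ⟨hxa, ε, hε, hball⟩ := mem_intrinsicInterior_iff_dist.1 hx
    rw [hspan] at hxa hball
    -- push `x` slightly away from `x₀`; `x` then lies strictly between `x₀` and that point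
    set θ := ε / (2 * (dist x₀ x + 1))
    have hθ : 0 < θ := by positivity
    have hx₁ : lineMap x₀ x (1 + θ) ∈ closure E := by
      refine hME (hball _ (AffineMap.lineMap_mem _ (mem_affineSpan ℝ
        (intrinsicInterior_subset hx₀)) hxa) ?_)
      have hθd : θ * dist x₀ x + θ = ε / 2 := by
        simp only [θ]; field_simp
      rw [dist_lineMap_right, sub_add_cancel_left, norm_neg, Real.norm_of_nonneg hθ.le]
      linarith
    have hxe : x = lineMap (lineMap x₀ x (1 + θ)) x₀ (θ / (1 + θ)) := by
      simp only [lineMap_apply_module]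
      match_scalars <;> field_simp <;> ring
    rw [hxe]
    exact hE.lineMap_mem_intrinsicInterior hx₀ hx₁ (by positivity)
      (div_le_one_of_le₀ (by linarith) (by positivity))
  · intro hx
    obtain ⟨ε, hε, hball⟩ := exists_forall_dist_lt_mem_intrinsicInterior hx
    rw [← hspan] at hball
    exact mem_intrinsicInterior_iff_dist.2 ⟨hspan ▸ mem_affineSpan ℝ (intrinsicInterior_subset hx),
      ε, hε, fun y hy hyx => hEM (hball y hy hyx)⟩

end IntrinsicInterior

section Projection

variable {X : Type*} [NormedAddCommGroup X] [InnerProductSpace ℝ X]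

theorem isBounded_range_starProjection {ι : Type*} {V : Submodule ℝ X} [FiniteDimensional ℝ V]
    {u : ι → X} {ρ : ℝ} (hρ : 0 < ρ)
    (h : ∀ v ∈ V, ‖v‖ < ρ → BddAbove (range fun i => ⟪v, u i⟫)) :
    Bornology.IsBounded (range fun i => V.starProjection (u i)) := by
  let b := stdOrthonormalBasis ℝ V
  have hb : ∀ j, ‖(b j : X)‖ = 1 := fun j => b.orthonormal.1 j
  have hcoord : ∀ j, ∃ M, ∀ i, |⟪(b j : X), u i⟫| ≤ M := by
    intro j
    have hside : ∀ c : ℝ, |c| = ρ / 2 → ∃ M, ∀ i, c * ⟪(b j : X), u i⟫ ≤ M := by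
      intro c hc
      obtain ⟨M, hM⟩ := h (c • (b j : X)) (V.smul_mem c (b j).2)
        (by rw [norm_smul, Real.norm_eq_abs, hc, hb, mul_one]; linarith)
      exact ⟨M, fun i => by simpa [real_inner_smul_left] using hM (mem_range_self i)⟩
    obtain ⟨M₁, hM₁⟩ := hside (ρ / 2) (abs_of_pos (by positivity))
    obtain ⟨M₂, hM₂⟩ := hside (-(ρ / 2)) (by rw [abs_neg, abs_of_pos (by positivity)])
    refine ⟨max M₁ M₂ / (ρ / 2), fun i => ?_⟩
    rw [le_div_iff₀ (by positivity)]
    cases abs_cases ⟪(b j : X), u i⟫ <;>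
      nlinarith [hM₁ i, hM₂ i, le_max_left M₁ M₂, le_max_right M₁ M₂]
  choose M hM using hcoord
  refine isBounded_iff_forall_norm_le.2 ⟨∑ j, M j, forall_mem_range.2 fun i => ?_⟩
  have hsum : V.starProjection (u i) = ∑ j, ⟪(b j : X), u i⟫ • (b j : X) := by
    simp [b.starProjection_eq_sum_rankOne]
  calc ‖V.starProjection (u i)‖ ≤ ∑ j, ‖⟪(b j : X), u i⟫ • (b j : X)‖ := hsum ▸ norm_sum_le _ _
    _ ≤ ∑ j, M j := Finset.sum_le_sum fun j _ => by
        rw [norm_smul, hb, mul_one, Real.norm_eq_abs]; exact hM j i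

end Projection

section FirmlyNonexpansive

variable {X : Type*} [NormedAddCommGroup X] [InnerProductSpace ℝ X]

def IsFirmlyNonexpansive (T : X → X) : Prop :=
  ∀ x y, 0 ≤ ⟪T x - T y, (x - y) - (T x - T y)⟫

variable {T : X → X}

theorem IsFirmlyNonexpansive.lipschitzWith_sub_two_smul (hT : IsFirmlyNonexpansive T) :
    LipschitzWith 1 fun x => x - (2 : ℝ) • T x := by
  refine LipschitzWith.of_dist_le_mul fun x y => ?_
  rw [NNReal.coe_one, one_mul, dist_eq_norm, dist_eq_norm]
  have hsq : ‖(x - (2 : ℝ) • T x) - (y - (2 : ℝ) • T y)‖ ^ 2 =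
      ‖x - y‖ ^ 2 - 4 * ⟪T x - T y, (x - y) - (T x - T y)⟫ := by
    rw [show (x - (2 : ℝ) • T x) - (y - (2 : ℝ) • T y) = (x - y) - (2 : ℝ) • (T x - T y) by
      module, norm_sub_sq_real, inner_sub_right, norm_smul, real_inner_smul_right,
      real_inner_self_eq_norm_sq, real_inner_comm]
    norm_num
    ring
  exact (pow_le_pow_iff_left₀ (norm_nonneg _) (norm_nonneg _) two_ne_zero).mp
    (by nlinarith [hT x y])

theorem IsFirmlyNonexpansive.exists_sub_apply_eq_smul [CompleteSpace X]
    (hT : IsFirmlyNonexpansive T) {c : ℝ} (hc : 0 < c) (x : X) :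
    ∃ t, x - T t = c • (t - T t) := by
  -- `x = c • t + (1 - c) • T t` rewrites as `t = (2 / (1 + c)) • x + k • (t - 2 • T t)`, a
  -- contraction since `t ↦ t - 2 • T t` is nonexpansive
  set k : ℝ := (1 - c) / (1 + c)
  have hk : ‖k‖₊ < 1 := by
    rw [← NNReal.coe_lt_coe, coe_nnnorm, Real.norm_eq_abs, NNReal.coe_one, abs_lt,
      lt_div_iff₀ (by linarith), div_lt_iff₀ (by linarith)]
    constructor <;> linarith
  have hf : ContractingWith ‖k‖₊ fun t => (2 / (1 + c)) • x + k • (t - (2 : ℝ) • T t) := by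
    refine ⟨hk, LipschitzWith.of_dist_le_mul fun t s => ?_⟩
    rw [dist_add_left, dist_smul₀, coe_nnnorm]
    gcongr
    simpa using hT.lipschitzWith_sub_two_smul.dist_le_mul t s
  refine ⟨hf.fixedPoint _, ?_⟩
  have h : (2 / (1 + c)) • x + k • (hf.fixedPoint _ - (2 : ℝ) • T (hf.fixedPoint _)) =
      hf.fixedPoint _ := hf.fixedPoint_isFixedPt
  linear_combination (norm := skip) ((1 + c) / 2) • h
  match_scalars <;> (try simp only [k]) <;> field_simp <;> ring

def HasLinearGapBound (T : X → X) (x : X) : Prop :=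
  ∃ α β : ℝ, 0 ≤ β ∧ ∀ t, ⟪x - T t, t - T t⟫ ≤ α + β * ‖T t‖

theorem IsFirmlyNonexpansive.hasLinearGapBound_apply (hT : IsFirmlyNonexpansive T) (s : X) :
    HasLinearGapBound T (T s) := by
  refine ⟨‖T s‖ * ‖s - T s‖, ‖s - T s‖, norm_nonneg _, fun t => ?_⟩
  have hfne := hT s t
  have hgap : ⟪T s - T t, t - T t⟫ ≤ ⟪T s - T t, s - T s⟫ := by
    rw [show s - t - (T s - T t) = (s - T s) - (t - T t) by abel, inner_sub_right] at hfne
    linarith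
  calc ⟪T s - T t, t - T t⟫ ≤ ‖T s - T t‖ * ‖s - T s‖ := hgap.trans (real_inner_le_norm _ _)
    _ ≤ (‖T s‖ + ‖T t‖) * ‖s - T s‖ := by gcongr; exact norm_sub_le _ _
    _ = _ := by ring

theorem convex_setOf_hasLinearGapBound (T : X → X) : Convex ℝ {x | HasLinearGapBound T x} := by
  rintro x ⟨α, β, hβ, hx⟩ y ⟨α', β', hβ', hy⟩ a b ha hb hab
  refine ⟨a * α + b * α', a * β + b * β', by positivity, fun t => ?_⟩
  have hsplit : a • x + b • y - T t = a • (x - T t) + b • (y - T t) := by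
    calc a • x + b • y - T t = a • x + b • y - (a + b) • T t := by rw [hab, one_smul]
      _ = a • (x - T t) + b • (y - T t) := by module
  rw [hsplit, inner_add_left, real_inner_smul_left, real_inner_smul_left]
  nlinarith [mul_le_mul_of_nonneg_left (hx t) ha, mul_le_mul_of_nonneg_left (hy t) hb]

theorem IsFirmlyNonexpansive.hasLinearGapBound_of_mem_convexHull (hT : IsFirmlyNonexpansive T)
    {x : X} (hx : x ∈ convexHull ℝ (range T)) : HasLinearGapBound T x :=
  convexHull_min (t := {x | HasLinearGapBound T x})
    (range_subset_iff.2 hT.hasLinearGapBound_apply) (convex_setOf_hasLinearGapBound T) hx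

theorem HasLinearGapBound.exists_norm_sub_sq_le {x : X} (hx : HasLinearGapBound T x) :
    ∃ M, ∀ c t, 0 < c → c ≤ 1 → x - T t = c • (t - T t) → ‖x - T t‖ ^ 2 ≤ c * M := by
  obtain ⟨α, β, hβ, hgap⟩ := hx
  refine ⟨2 * |α + β * ‖x‖| + β ^ 2, fun c t hc hc1 ht => ?_⟩
  set d := ‖x - T t‖
  have hd : d ^ 2 = c * ⟪x - T t, t - T t⟫ := by
    rw [← real_inner_self_eq_norm_sq, ht, real_inner_smul_left, ← ht, real_inner_comm]
  have hTt : ‖T t‖ ≤ ‖x‖ + d := by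
    simpa using norm_sub_le x (x - T t)
  have hd' : d ^ 2 ≤ c * (α + β * ‖x‖) + c * β * d := by
    rw [hd]; nlinarith [hgap t, mul_le_mul_of_nonneg_left hTt hβ]
  have hc2 : c ^ 2 * β ^ 2 ≤ c * β ^ 2 := by gcongr; nlinarith
  nlinarith [sq_nonneg (d - c * β), mul_le_mul_of_nonneg_left (le_abs_self (α + β * ‖x‖)) hc.le]

theorem IsFirmlyNonexpansive.exists_seq_tendsto_of_hasLinearGapBound [CompleteSpace X]
    (hT : IsFirmlyNonexpansive T) {x : X} (hx : HasLinearGapBound T x) :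
    ∃ t : ℕ → X, (∀ n, x - T (t n) = (1 / ((n : ℝ) + 1)) • (t n - T (t n))) ∧
      Tendsto (fun n => T (t n)) atTop (𝓝 x) := by
  obtain ⟨M, hM⟩ := hx.exists_norm_sub_sq_le
  have hc : ∀ n : ℕ, 0 < 1 / ((n : ℝ) + 1) := fun n => by positivity
  choose t ht using fun n => hT.exists_sub_apply_eq_smul (hc n) x
  have hlim := (tendsto_one_div_add_atTop_nhds_zero_nat.mul_const M).sqrt
  rw [zero_mul, Real.sqrt_zero] at hlim
  refine ⟨t, ht, tendsto_iff_norm_sub_tendsto_zero.2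
    (squeeze_zero (fun _ => norm_nonneg _) (fun n => ?_) hlim)⟩
  have hc1 : 1 / ((n : ℝ) + 1) ≤ 1 := div_le_one_of_le₀ (by simp) (by positivity)
  rw [norm_sub_rev]
  exact Real.le_sqrt_of_sq_le (hM _ _ (hc n) hc1 (ht n))

theorem IsFirmlyNonexpansive.mem_closure_range [CompleteSpace X] (hT : IsFirmlyNonexpansive T)
    {x : X} (hx : HasLinearGapBound T x) : x ∈ closure (range T) :=
  let ⟨t, _, hlim⟩ := hT.exists_seq_tendsto_of_hasLinearGapBound hx
  mem_closure_of_tendsto hlim (Eventually.of_forall fun n => mem_range_self (t n))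

theorem HasLinearGapBound.bddAbove_range_inner {ι : Type*} {x v : X}
    (hxv : HasLinearGapBound T (x + v)) {t : ι → X}
    (hpos : ∀ i, 0 ≤ ⟪x - T (t i), t i - T (t i)⟫) (hbdd : BddAbove (range fun i => ‖T (t i)‖)) :
    BddAbove (range fun i => ⟪v, t i - T (t i)⟫) := by
  obtain ⟨α, β, hβ, hgap⟩ := hxv
  obtain ⟨R, hR⟩ := hbdd
  refine ⟨α + β * R, forall_mem_range.2 fun i => ?_⟩
  have hsplit : ⟪v, t i - T (t i)⟫ =
      ⟪x + v - T (t i), t i - T (t i)⟫ - ⟪x - T (t i), t i - T (t i)⟫ := by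
    rw [← inner_sub_left]; congr 1; abel
  rw [hsplit]
  nlinarith [hgap (t i), hpos i, mul_le_mul_of_nonneg_left (hR (mem_range_self i)) hβ]

theorem apply_add_eq_of_forall_inner_nonneg {x w : X}
    (h : ∀ s, 0 ≤ ⟪x - T s, w - (s - T s)⟫) : T (x + w) = x := by
  have hs := h (x + w)
  rw [show w - (x + w - T (x + w)) = -(x - T (x + w)) by abel, inner_neg_right,
    neg_nonneg, real_inner_self_nonpos, sub_eq_zero] at hs
  exact hs.symm

theorem IsFirmlyNonexpansive.intrinsicInterior_convexHull_range_subset [FiniteDimensional ℝ X]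
    (hT : IsFirmlyNonexpansive T) : intrinsicInterior ℝ (convexHull ℝ (range T)) ⊆ range T := by
  intro x hx
  set V := (affineSpan ℝ (range T)).direction
  obtain ⟨hxa, ε, hε, hball⟩ := mem_intrinsicInterior_iff_dist.1 hx
  rw [affineSpan_convexHull] at hxa hball
  obtain ⟨t, ht, hlim⟩ := hT.exists_seq_tendsto_of_hasLinearGapBound
    (hT.hasLinearGapBound_of_mem_convexHull (intrinsicInterior_subset hx))
  -- the gap bounds at the points `x + v` near `x` bound the `V`-component of `t n - T (t n)`
  have hbdd : Bornology.IsBounded (range fun n => V.starProjection (t n - T (t n))) := by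
    refine isBounded_range_starProjection hε fun v hv hvε => ?_
    have hxva := AffineSubspace.vadd_mem_of_mem_direction hv hxa
    rw [vadd_eq_add, add_comm] at hxva
    have hxv : x + v ∈ convexHull ℝ (range T) :=
      hball _ hxva (by simpa [dist_eq_norm] using hvε)
    refine (hT.hasLinearGapBound_of_mem_convexHull hxv).bddAbove_range_inner (fun n => ?_)
      hlim.norm.bddAbove_range
    rw [ht n, real_inner_smul_left]
    exact mul_nonneg (by positivity) real_inner_self_nonneg
  obtain ⟨w, -, φ, hφ, hw⟩ := tendsto_subseq_of_bounded hbdd fun n => mem_range_self n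
  refine ⟨x + w, apply_add_eq_of_forall_inner_nonneg fun s => ?_⟩
  have hproj : ∀ n, ⟪T (t n) - T s, t n - T (t n)⟫ =
      ⟪T (t n) - T s, V.starProjection (t n - T (t n))⟫ := fun n => by
    have hV : T (t n) - T s ∈ V := AffineSubspace.vsub_mem_direction
      (mem_affineSpan ℝ (mem_range_self _)) (mem_affineSpan ℝ (mem_range_self _))
    rw [← Submodule.inner_starProjection_left_eq_right, Submodule.starProjection_eq_self_iff.2 hV]
  have hfne : ∀ n, 0 ≤ ⟪T (t n) - T s, V.starProjection (t n - T (t n)) - (s - T s)⟫ := by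
    intro n
    have := hT (t n) s
    rwa [show t n - s - (T (t n) - T s) = (t n - T (t n)) - (s - T s) by abel, inner_sub_right,
      hproj, ← inner_sub_right] at this
  exact ge_of_tendsto (((hlim.comp hφ.tendsto_atTop).sub_const _).inner (hw.sub_const _))
    (Eventually.of_forall fun n => hfne (φ n))

end FirmlyNonexpansive

section DouglasRachford

variable {X : Type*} [NormedAddCommGroup X] [InnerProductSpace ℝ X] {A B : X → Set X}
  {JA JB : X → X}

theorem exists_drT_eq_add (hJA : IsResolventOf JA A) (hJB : IsResolventOf JB B) (x : X) :
    ∃ a u b v, u ∈ A a ∧ v ∈ B b ∧ x = a + u ∧ drT JA JB x = u + b ∧ a = u + v + b :=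
  ⟨JA x, x - JA x, JB ((2 : ℝ) • JA x - x), (2 : ℝ) • JA x - x - JB ((2 : ℝ) • JA x - x),
    hJA x, hJB _, (add_sub_cancel _ _).symm, rfl, by module⟩

theorem isFirmlyNonexpansive_drT (hA : IsMonotoneOp A) (hB : IsMonotoneOp B)
    (hJA : IsResolventOf JA A) (hJB : IsResolventOf JB B) : IsFirmlyNonexpansive (drT JA JB) := by
  intro x y
  obtain ⟨_, u, b, v, hu, hv, rfl, hx, rfl⟩ := exists_drT_eq_add hJA hJB x
  obtain ⟨_, u', b', v', hu', hv', rfl, hy, rfl⟩ := exists_drT_eq_add hJA hJB y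
  rw [hx, hy]
  calc 0 ≤ ⟪u + v + b - (u' + v' + b'), u - u'⟫ + ⟪b - b', v - v'⟫ :=
        add_nonneg (hA hu hu') (hB hv hv')
    _ = _ := by
        simp only [inner_add_left, inner_add_right, inner_sub_left, inner_sub_right,
          real_inner_comm]
        ring

theorem range_drT_subset (hJA : IsResolventOf JA A) (hJB : IsResolventOf JB B) :
    range (drT JA JB) ⊆ (svDom A - svRan B) ∩ (svRan A + svDom B) := by
  rintro _ ⟨x, rfl⟩
  obtain ⟨a, u, b, v, hu, hv, -, hx, rfl⟩ := exists_drT_eq_add hJA hJB x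
  exact ⟨mem_sub.2 ⟨_, ⟨u, hu⟩, v, mem_iUnion.2 ⟨b, hv⟩, by rw [hx]; abel⟩,
    ⟨u, mem_iUnion.2 ⟨_, hu⟩, b, ⟨v, hv⟩, hx.symm⟩⟩

theorem hasLinearGapBound_drT (hA : Is3StarMonotoneOp A) (hB : Is3StarMonotoneOp B)
    (hJA : IsResolventOf JA A) (hJB : IsResolventOf JB B) {w : X}
    (hw : w ∈ (svDom A - svRan B) ∩ (svRan A + svDom B)) : HasLinearGapBound (drT JA JB) w := by
  obtain ⟨⟨p, hp, q, hq, rfl⟩, r, hr, s, hs, hrs⟩ := hw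
  obtain rfl : s = p - q - r := eq_sub_of_add_eq' hrs
  obtain ⟨k₁, hk₁⟩ := hA p hp r hr
  obtain ⟨k₂, hk₂⟩ := hB _ hs q hq
  refine ⟨‖p - q‖ * ‖r + q‖ - (k₁ + k₂), ‖r + q‖, norm_nonneg _, fun t => ?_⟩
  obtain ⟨_, u, b, v, hu, hv, rfl, ht, rfl⟩ := exists_drT_eq_add hJA hJB t
  rw [ht]
  have h₁ : k₁ ≤ ⟪p - (u + v + b), r - u⟫ := hk₁ ⟨_, _, hu, rfl⟩
  have h₂ : k₂ ≤ ⟪p - q - r - b, q - v⟫ := hk₂ ⟨_, _, hv, rfl⟩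
  -- the cross terms of the two 3* bounds cancel
  have hgap : ⟪p - q - (u + b), u + v + b + u - (u + b)⟫ =
      ⟪p - q - (u + b), r + q⟫ - ⟪p - (u + v + b), r - u⟫ - ⟪p - q - r - b, q - v⟫ := by
    simp only [inner_add_left, inner_add_right, inner_sub_left, inner_sub_right, real_inner_comm]
    ring
  have hcs := real_inner_le_norm (p - q - (u + b)) (r + q)
  have htri := norm_sub_le (p - q) (u + b)
  nlinarith [mul_le_mul_of_nonneg_right htri (norm_nonneg (r + q))]

end DouglasRachford

/-- For maximally monotone and 3* monotone `A, B`, the range of the Douglas–Rachford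
operator is nearly equal to `(dom A - ran B) ∩ (ran A + dom B)`. -/
theorem ran_drT_nearEq {X : Type*} [NormedAddCommGroup X] [InnerProductSpace ℝ X]
    [FiniteDimensional ℝ X] (A B : X → Set X)
    (hA : IsMaxMonotoneOp A) (hB : IsMaxMonotoneOp B)
    (hA3 : Is3StarMonotoneOp A) (hB3 : Is3StarMonotoneOp B)
    (JA JB : X → X) (hJA : IsResolventOf JA A) (hJB : IsResolventOf JB B) :
    NearEq (Set.range (drT JA JB))
      ((svDom A - svRan B) ∩ (svRan A + svDom B)) := by
  have hT := isFirmlyNonexpansive_drT hA.1 hB.1 hJA hJB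
  have hran := range_drT_subset hJA hJB
  have hdense : (svDom A - svRan B) ∩ (svRan A + svDom B) ⊆ closure (range (drT JA JB)) :=
    fun w hw => hT.mem_closure_range (hasLinearGapBound_drT hA3 hB3 hJA hJB hw)
  have hhull := subset_convexHull ℝ (range (drT JA JB))
  have hri := hT.intrinsicInterior_convexHull_range_subset
  have hconv := convex_convexHull ℝ (range (drT JA JB))
  refine ⟨(closure_mono hran).antisymm (closure_minimal hdense isClosed_closure), ?_⟩
  rw [hconv.intrinsicInterior_eq_of_subset_of_subset_closure hri (hhull.trans subset_closure),
    hconv.intrinsicInterior_eq_of_subset_of_subset_closure (hri.trans hran)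
      (hdense.trans (closure_mono hhull))]
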